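/- Fix a profile of complete transitive preferences over a finite set A with |A| β‰₯ k. There exists a committee of size k that is simultaneously B-efficient and DL-efficient. -/

import Mathlib

open Finset

variable {A : Type*}

/-- An agent's complete transitive preference over `A` is represented by a rank
function (smaller rank = more preferred); the fibers of `rank` are the
indifference classes `E^1 ≻ E^2 ≻ ⋯`.  `S ≿ᴿˢ T` (responsive extension):
there is a bijection `f : T → S` with `f a ≿ a` for all `a ∈ T`. -/
def RSge (rank : A → ℕ) (S T : Finset A) : Prop :=
  ∃ f : A → A, Set.BijOn f ↑T ↑S ∧ ∀ a ∈ T, rank (f a) ≤ rank a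

/-- Number of members of `S` in the indifference class of rank `l`. -/
def cnt (rank : A → ℕ) (S : Finset A) (l : ℕ) : ℕ :=
  (S.filter fun a => rank a = l).card

/-- Downward lexicographic extension: either all class counts agree, or at the
smallest (most preferred) class where they differ, `S` has more members. -/
def DLge (rank : A → ℕ) (S T : Finset A) : Prop :=
  (∀ l, cnt rank S l = cnt rank T l) ∨
    ∃ l, cnt rank T l < cnt rank S l ∧ ∀ l' < l, cnt rank S l' = cnt rank T l'

/-- Upward lexicographic extension: either all class counts agree, or at the
largest (least preferred) class where they differ, `S` has fewer members. -/
def ULge (rank : A → ℕ) (S T : Finset A) : Prop :=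
  (∀ l, cnt rank S l = cnt rank T l) ∨
    ∃ l, cnt rank S l < cnt rank T l ∧ ∀ l' > l, cnt rank S l' = cnt rank T l'

/-- `best` extension: every maximal (most preferred) element of `S` is weakly
preferred to every maximal element of `T`. -/
def Bge (rank : A → ℕ) (S T : Finset A) : Prop :=
  ∀ s ∈ S, (∀ x ∈ S, rank s ≤ rank x) →
    ∀ t ∈ T, (∀ x ∈ T, rank t ≤ rank x) → rank s ≤ rank t

/-- `worst` extension: every minimal (least preferred) element of `S` is weakly
preferred to every minimal element of `T`. -/
def Wge (rank : A → ℕ) (S T : Finset A) : Prop :=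
  ∀ s ∈ S, (∀ x ∈ S, rank x ≤ rank s) →
    ∀ t ∈ T, (∀ x ∈ T, rank x ≤ rank t) → rank s ≤ rank t

/-- Pareto optimality (efficiency) of a committee `W` of size `k` with respect
to the set extension whose weak relation is `ge`, for the profile `rank` of the
agents in `I`: no size-`k` committee weakly improves for every agent and
strictly improves (weakly better but not weakly worse) for some agent. -/
def Efficient {I : Type*} (ge : (A → ℕ) → Finset A → Finset A → Prop)
    (rank : I → A → ℕ) (k : ℕ) (W : Finset A) : Prop :=
  ¬ ∃ W' : Finset A, W'.card = k ∧ (∀ i, ge (rank i) W' W) ∧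
      ∃ i, ge (rank i) W' W ∧ ¬ ge (rank i) W W'

/-! Pareto improvement with respect to `Bge` or `DLge` is a strict order on committees: both
extensions are transitive (`Bge` only through a nonempty middle committee, which suffices because
an improving committee is never empty), so on the finitely many committees every nonempty family
closed under improvements contains an efficient member. Start from a B-efficient committee and
improve it for DL as long as possible. A DL-improvement weakly B-improves for every agent, since
an agent's DL comparison is decided no lower than her best class, so it stays B-efficient; the
DL-maximal end point is efficient for both extensions. -/

section Committees

variable {I : Type*}

def ParetoImproves (ge : (A → ℕ) → Finset A → Finset A → Prop) (rank : I → A → ℕ)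
    (W' W : Finset A) : Prop :=
  (∀ i, ge (rank i) W' W) ∧ ∃ i, ge (rank i) W' W ∧ ¬ ge (rank i) W W'

section Pareto

variable {ge : (A → ℕ) → Finset A → Finset A → Prop} {rank : I → A → ℕ}

theorem paretoImproves_irrefl (W : Finset A) : ¬ ParetoImproves ge rank W W :=
  fun ⟨_, _, hge, hnot⟩ => hnot hge

theorem ParetoImproves.nonempty (hbot : ∀ i S, ge (rank i) S ∅) {W' W : Finset A}
    (h : ParetoImproves ge rank W' W) : W'.Nonempty := by
  obtain ⟨-, i, -, hnot⟩ := h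
  rw [nonempty_iff_ne_empty]
  rintro rfl
  exact hnot (hbot i W)

theorem ParetoImproves.trans
    (htrans : ∀ i {S T U : Finset A}, T.Nonempty → ge (rank i) S T → ge (rank i) T U →
      ge (rank i) S U)
    (hbot : ∀ i S, ge (rank i) S ∅) {W₁ W₂ W₃ : Finset A}
    (h₃₂ : ParetoImproves ge rank W₃ W₂) (h₂₁ : ParetoImproves ge rank W₂ W₁) :
    ParetoImproves ge rank W₃ W₁ := by
  have hW₂ := h₂₁.nonempty hbot
  have hW₃ := h₃₂.nonempty hbot
  obtain ⟨i, hge, hnot⟩ := h₂₁.2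
  refine ⟨fun j => htrans j hW₂ (h₃₂.1 j) (h₂₁.1 j), i, htrans i hW₂ (h₃₂.1 i) hge, ?_⟩
  exact fun h₁₃ => hnot (htrans i hW₃ h₁₃ (h₃₂.1 i))

theorem wellFounded_paretoImproves [Finite A]
    (htrans : ∀ i {S T U : Finset A}, T.Nonempty → ge (rank i) S T → ge (rank i) T U →
      ge (rank i) S U)
    (hbot : ∀ i S, ge (rank i) S ∅) :
    WellFounded (ParetoImproves ge rank) :=
  haveI : IsTrans _ (ParetoImproves ge rank) := ⟨fun _ _ _ h₁ h₂ => h₁.trans htrans hbot h₂⟩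
  haveI : Std.Irrefl (ParetoImproves ge rank) := ⟨paretoImproves_irrefl⟩
  Finite.wellFounded_of_trans_of_irrefl _

theorem exists_efficient_mem (hwf : WellFounded (ParetoImproves ge rank)) {k : ℕ}
    {s : Set (Finset A)} (hs : s.Nonempty)
    (hclosed : ∀ W ∈ s, ∀ W', W'.card = k → ParetoImproves ge rank W' W → W' ∈ s) :
    ∃ W ∈ s, Efficient ge rank k W := by
  obtain ⟨W, hW, hmin⟩ := hwf.has_min s hs
  exact ⟨W, hW, fun ⟨W', hW'k, himp⟩ => hmin W' (hclosed W hW W' hW'k himp) himp⟩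

end Pareto

section Extensions

variable {rank : A → ℕ} {S T U : Finset A}

theorem cnt_pos_of_mem {a : A} (ha : a ∈ S) : 0 < cnt rank S (rank a) :=
  card_pos.mpr ⟨a, mem_filter.mpr ⟨ha, rfl⟩⟩

theorem cnt_eq_zero_of_lt {m l : ℕ} (hS : ∀ x ∈ S, m ≤ rank x) (hl : l < m) :
    cnt rank S l = 0 :=
  card_eq_zero.mpr <| filter_eq_empty_iff.mpr fun x hx hxl =>
    (hl.trans_le (hS x hx)).ne hxl.symm

theorem dLge_iff_toLex_le : DLge rank S T ↔ toLex (cnt rank T) ≤ toLex (cnt rank S) := by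
  rw [le_iff_eq_or_lt, DLge]
  refine or_congr ?_ ?_
  · rw [toLex_inj, funext_iff]
    exact forall_congr' fun l => eq_comm
  · exact exists_congr fun l =>
      ⟨fun ⟨hlt, hlow⟩ => ⟨fun j hj => (hlow j hj).symm, hlt⟩,
        fun ⟨hlow, hlt⟩ => ⟨hlt, fun j hj => (hlow j hj).symm⟩⟩

theorem DLge.trans (h₁ : DLge rank S T) (h₂ : DLge rank T U) : DLge rank S U :=
  dLge_iff_toLex_le.mpr <| (dLge_iff_toLex_le.mp h₂).trans (dLge_iff_toLex_le.mp h₁)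

theorem dLge_empty_right : DLge rank S ∅ :=
  dLge_iff_toLex_le.mpr <| Pi.toLex_monotone fun l => by simp [cnt]

theorem DLge.bge (h : DLge rank S T) : Bge rank S T := by
  intro s hs hsmin t ht htmin
  by_contra! hts
  have hlow : ∀ j < rank t, cnt rank T j = cnt rank S j := fun j hj => by
    rw [cnt_eq_zero_of_lt htmin hj, cnt_eq_zero_of_lt hsmin (hj.trans hts)]
  have hle := Pi.apply_le_of_toLex (dLge_iff_toLex_le.mp h) hlow
  rw [cnt_eq_zero_of_lt hsmin hts] at hle
  exact (cnt_pos_of_mem ht).ne' (Nat.le_zero.mp hle)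

theorem Bge.trans (hT : T.Nonempty) (h₁ : Bge rank S T) (h₂ : Bge rank T U) : Bge rank S U := by
  intro s hs hsmin u hu humin
  obtain ⟨t, ht, htmin⟩ := T.exists_min_image rank hT
  exact (h₁ s hs hsmin t ht htmin).trans (h₂ t ht htmin u hu humin)

theorem bge_empty_right : Bge rank S ∅ :=
  fun _ _ _ t ht => absurd ht (notMem_empty t)

end Extensions

theorem Efficient.of_paretoImproves_dLge {rank : I → A → ℕ} {k : ℕ} {W W' : Finset A}
    (hWk : W.card = k) (hW : Efficient Bge rank k W) (h : ParetoImproves DLge rank W' W) :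
    Efficient Bge rank k W' := by
  rintro ⟨W'', hW''k, himp⟩
  have hW'' : W''.Nonempty := ParetoImproves.nonempty (fun _ _ => bge_empty_right) himp
  have hW'ne : W'.Nonempty := h.nonempty fun _ _ => dLge_empty_right
  have hW'B : ∀ j, Bge (rank j) W' W := fun j => (h.1 j).bge
  obtain ⟨hall, i, hge, hnot⟩ := himp
  refine hW ⟨W'', hW''k, fun j => Bge.trans hW'ne (hall j) (hW'B j), i,
    Bge.trans hW'ne hge (hW'B i), fun hWW'' => hnot ?_⟩
  have hWne : W.Nonempty := card_pos.mp (hWk ▸ hW''k ▸ hW''.card_pos)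
  exact Bge.trans hWne (hW'B i) hWW''

end Committees

theorem exists_best_and_dl_efficient_general {I : Type*} [Fintype A]
    (rank : I → A → ℕ) (k : ℕ) (hk : k ≤ Fintype.card A) :
    ∃ W : Finset A, W.card = k ∧ Efficient Bge rank k W ∧ Efficient DLge rank k W := by
  have hwfB : WellFounded (ParetoImproves Bge rank) :=
    wellFounded_paretoImproves (fun _ _ _ _ => Bge.trans) fun _ _ => bge_empty_right
  have hwfDL : WellFounded (ParetoImproves DLge rank) :=
    wellFounded_paretoImproves (fun _ _ _ _ _ => DLge.trans) fun _ _ => dLge_empty_right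
  obtain ⟨W₀, hW₀k, hW₀⟩ := exists_efficient_mem hwfB (k := k) (s := {W | W.card = k})
    (exists_subset_card_eq (by rwa [card_univ]) |>.imp fun _ h => h.2)
    fun _ _ _ hW'k _ => hW'k
  obtain ⟨W, ⟨hWk, hWB⟩, hWDL⟩ := exists_efficient_mem hwfDL
    (s := {W | W.card = k ∧ Efficient Bge rank k W}) ⟨W₀, hW₀k, hW₀⟩
    fun _ ⟨hWk, hWB⟩ _ hW'k h => ⟨hW'k, hWB.of_paretoImproves_dLge hWk h⟩
  exact ⟨W, hWk, hWB, hWDL⟩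

theorem exists_best_and_dl_efficient {I : Type*} [Fintype I] [Fintype A]
    (rank : I → A → ℕ) (k : ℕ) (hk : k ≤ Fintype.card A) :
    ∃ W : Finset A, W.card = k ∧ Efficient Bge rank k W ∧ Efficient DLge rank k W :=
  exists_best_and_dl_efficient_general rank k hk
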